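/- Let M be a set of paths in ℝ^d that is closed under concatenation: X ⊔ Y ∈ M for all X, Y ∈ M. Then I := ℐ(M) is a coideal of the deconcatenation coproduct in the sense that Δx ∈ I⊗T(ℝ^d) + T(ℝ^d)⊗I for every x ∈ I. -/

import Mathlib

open scoped BigOperators TensorProduct

namespace PathVarieties

/-- Words over an alphabet `α`; the letters `{1,…,d}` of `ℝ^d` correspond to `α = Fin d`. -/
abbrev Word (α : Type*) := List α

/-- The tensor algebra `T(ℝ^d)`, identified with the free real vector space on words. -/
abbrev TA (α : Type*) := Word α →₀ ℝ

/-- The list of all (riffle) shuffles of two words. -/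
def shuffles {α : Type*} : Word α → Word α → List (Word α)
  | [], v => [v]
  | a :: u, [] => [a :: u]
  | a :: u, b :: v =>
      ((shuffles u (b :: v)).map (a :: ·)) ++ ((shuffles (a :: u) v).map (b :: ·))
termination_by u v => u.length + v.length
decreasing_by all_goals (simp only [List.length_cons]; omega)

/-- Shuffle product of two words, as an element of `T(ℝ^d)`. -/
noncomputable def shw {α : Type*} (u v : Word α) : TA α :=
  ((shuffles u v).map fun w => Finsupp.single w (1 : ℝ)).sum

/-- The shuffle product `⧢` on `T(ℝ^d)`, the bilinear extension of the shuffle of words. -/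
noncomputable def sh {α : Type*} (x y : TA α) : TA α :=
  x.sum fun u cu => y.sum fun v cv => (cu * cv) • shw u v

/-- Right halfshuffle `u ≻ v` of words (`v` nonempty): shuffle `u` with `v` minus its
last letter, then append the last letter of `v`.  (This is the unique bilinear operation
with `w ≻ a = wa` and `w ≻ (va) = (w≻v + v≻w)a`.) -/
noncomputable def rshw {α : Type*} (u v : Word α) : TA α :=
  ((shuffles u v.dropLast).map fun w =>
    Finsupp.single (w ++ v.drop (v.length - 1)) (1 : ℝ)).sum

/-- Right halfshuffle `≻` on `T^{≥1}(ℝ^d)`, extended bilinearly. -/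
noncomputable def rsh {α : Type*} (x y : TA α) : TA α :=
  x.sum fun u cu => y.sum fun v cv => (cu * cv) • rshw u v

/-- Left halfshuffle `u ≺ v` of words (`u` nonempty): the first letter of `u` followed by
the shuffle of the rest of `u` with `v`.  (This is the unique bilinear operation with
`a ≺ w = aw` and `(av) ≺ w = a(w≺v + v≺w)`.) -/
noncomputable def lshw {α : Type*} (u v : Word α) : TA α :=
  ((shuffles u.tail v).map fun w => Finsupp.single (u.take 1 ++ w) (1 : ℝ)).sum

/-- Left halfshuffle `≺` on `T^{≥1}(ℝ^d)`, extended bilinearly. -/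
noncomputable def lsh {α : Type*} (x y : TA α) : TA α :=
  x.sum fun u cu => y.sum fun v cv => (cu * cv) • lshw u v

/-- The antipode `𝒜`, with `𝒜(i₁⋯iₙ) = (−1)ⁿ iₙ⋯i₁`. -/
noncomputable def antipode {α : Type*} (x : TA α) : TA α :=
  x.sum fun w c => Finsupp.single w.reverse (((-1 : ℝ) ^ w.length) * c)

/-- Helper for `Λ_B`: value on a reversed word. -/
noncomputable def lamRev {α β : Type*} (B : α → TA β) : Word α → TA β
  | [] => Finsupp.single [] 1
  | [i] => B i
  | i :: w => rsh (lamRev B w) (B i)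

/-- `Λ_B` on a word: `Λ_B e = e`, `Λ_B i = B i`, `Λ_B (w·i) = (Λ_B w) ≻ (Λ_B i)`. -/
noncomputable def lamW {α β : Type*} (B : α → TA β) (w : Word α) : TA β :=
  lamRev B w.reverse

/-- The linear map `Λ_B : T(ℝ^t) → T(ℝ^d)` induced by `B` on letters. -/
noncomputable def Lam {α β : Type*} (B : α → TA β) (x : TA α) : TA β :=
  x.sum fun w c => c • lamW B w

/-- `splitEmb e j n w = Σ_{w = u₁⋯uₙ} e_j(u₁) ⧢ e_{j+1}(u₂) ⧢ ⋯ ⧢ e_{j+n−1}(uₙ)`,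
the sum over all splittings of `w` into `n` consecutive (possibly empty) factors,
each factor relabelled letterwise by `e`. -/
noncomputable def splitEmb {α β : Type*} (e : ℕ → α → β) : ℕ → ℕ → Word α → TA β
  | _, 0, w => if w.isEmpty then Finsupp.single ([] : Word β) (1 : ℝ) else 0
  | j, k + 1, w => ∑ m ∈ Finset.range (w.length + 1),
      sh (Finsupp.single ((w.take m).map (e j)) (1 : ℝ)) (splitEmb e (j + 1) k (w.drop m))

/-- `Σ_{x=uv} f(u)·v`: deconcatenate, evaluate the functional `f` on prefixes. -/
noncomputable def leftAct {α : Type*} (f : Word α → ℝ) (x : TA α) : TA α :=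
  x.sum fun w c => c • ∑ k ∈ Finset.range (w.length + 1),
    f (w.take k) • Finsupp.single (w.drop k) (1 : ℝ)

/-- `Σ_{x=uv} u·f(v)`: deconcatenate, evaluate the functional `f` on suffixes. -/
noncomputable def rightAct {α : Type*} (f : Word α → ℝ) (x : TA α) : TA α :=
  x.sum fun w c => c • ∑ k ∈ Finset.range (w.length + 1),
    f (w.drop k) • Finsupp.single (w.take k) (1 : ℝ)

/-- A raw path: a time horizon `T` together with a map `ℝ → ℝ^α`
(only the restriction to `[0,T]` is relevant). -/
structure RawPath (α : Type*) where
  T : ℝ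
  toFun : ℝ → α → ℝ

/-- A path: positive time horizon, continuous on `[0,T]` and piecewise continuously
differentiable there (witnessed by a partition `0 = τ₀ < τ₁ < ⋯ < τₙ = T`). -/
def IsPath {α : Type*} (X : RawPath α) : Prop :=
  0 < X.T ∧ (∀ i, ContinuousOn (fun t => X.toFun t i) (Set.Icc 0 X.T)) ∧
    ∃ (n : ℕ) (τ : Fin (n + 1) → ℝ), StrictMono τ ∧ τ 0 = 0 ∧ τ (Fin.last n) = X.T ∧
      ∀ (k : Fin n) (i : α), ContDiffOn ℝ 1 (fun t => X.toFun t i)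
        (Set.Icc (τ k.castSucc) (τ k.succ))

/-- Iterated integrals, by recursion on the reversed word:
`sigRev X (i :: w) t = ∫₀ᵗ ⟨σ(X)ₛ, w.reverse⟩ dX⁽ⁱ⁾(s)`. -/
noncomputable def sigRev {α : Type*} (X : ℝ → α → ℝ) : Word α → ℝ → ℝ
  | [], _ => 1
  | i :: w, t => ∫ s in (0 : ℝ)..t, sigRev X w s * deriv (fun u => X u i) s

/-- `⟨σ(X)_t, w⟩`, the iterated-integrals signature of `X` stopped at time `t`. -/
noncomputable def sigUpTo {α : Type*} (X : RawPath α) (t : ℝ) (w : Word α) : ℝ :=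
  sigRev X.toFun w.reverse t

/-- `⟨σ(X), w⟩`, the iterated-integrals signature of the path `X` at a word `w`. -/
noncomputable def sig {α : Type*} (X : RawPath α) (w : Word α) : ℝ :=
  sigUpTo X X.T w

/-- Pairing of a word-indexed functional with an element of `T(ℝ^d)`. -/
noncomputable def pairF {α : Type*} (f : Word α → ℝ) (x : TA α) : ℝ :=
  x.sum fun w c => c * f w

/-- `⟨σ(X), x⟩` for a tensor `x ∈ T(ℝ^d)` (linear in `x`). -/
noncomputable def pair {α : Type*} (X : RawPath α) (x : TA α) : ℝ :=
  Finsupp.linearCombination ℝ (sig X) x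

/-- The path variety `𝒱(W)` of all paths whose signature kills every element of `W`. -/
def V {α : Type*} (W : Set (TA α)) : Set (RawPath α) :=
  {X | IsPath X ∧ ∀ x ∈ W, pair X x = 0}

/-- `ℐ(M)`, the space of tensors killed by the signature of every path in `M`. -/
noncomputable def Idl {α : Type*} (M : Set (RawPath α)) : Submodule ℝ (TA α) :=
  ⨅ X ∈ M, LinearMap.ker (Finsupp.linearCombination ℝ (sig X))

/-- Concatenation `X ⊔ Y` of paths. -/
noncomputable def concat {α : Type*} (X Y : RawPath α) : RawPath α where
  T := X.T + Y.T
  toFun := fun t i =>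
    if t ≤ X.T then X.toFun t i else Y.toFun (t - X.T) i + X.toFun X.T i - Y.toFun 0 i

/-- Time reversal `⟵X`. -/
def timeRev {α : Type*} (X : RawPath α) : RawPath α :=
  ⟨X.T, fun t i => X.toFun (X.T - t) i⟩

/-- `concatIter X n = X^{⊔(n+1)}`. -/
noncomputable def concatIter {α : Type*} (X : RawPath α) : ℕ → RawPath α
  | 0 => X
  | n + 1 => concat (concatIter X n) X

/-- `X^{⊔n}`, the `n`-fold concatenation of `X` with itself (intended for `n ≥ 1`). -/
noncomputable def concatPow {α : Type*} (X : RawPath α) (n : ℕ) : RawPath α :=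
  concatIter X (n - 1)

/-- `concatFold f k = f 0 ⊔ f 1 ⊔ ⋯ ⊔ f k`. -/
noncomputable def concatFold {α : Type*} (f : ℕ → RawPath α) : ℕ → RawPath α
  | 0 => f 0
  | k + 1 => concat (concatFold f k) (f (k + 1))

/-- The deconcatenation coproduct `Δ : T(ℝ^d) → T(ℝ^d) ⊗ T(ℝ^d)`,
`Δw = Σ_{w=uv} u ⊗ v`. -/
noncomputable def deconc {α : Type*} (x : TA α) : TensorProduct ℝ (TA α) (TA α) :=
  x.sum fun w c => c • ∑ k ∈ Finset.range (w.length + 1),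
    (Finsupp.single (w.take k) (1 : ℝ)) ⊗ₜ[ℝ] (Finsupp.single (w.drop k) (1 : ℝ))

end PathVarieties

/-!
Chen's identity turns the pairing of `σ(X) ⊗ σ(Y)` with `Δx` into `⟨σ(X ⊔ Y), x⟩`, which
vanishes for `x ∈ ℐ(M)` since `M` is closed under concatenation. So `Δx` is killed by every
`f ⊗ g` with `f, g` signature functionals of paths of `M`. These functionals separate the points
of `T ⧸ ℐ(M)`, hence the image of `Δx` in `(T ⧸ ℐ(M)) ⊗ (T ⧸ ℐ(M))` vanishes, and by right
exactness of `⊗` the kernel of `T ⊗ T → (T ⧸ ℐ(M)) ⊗ (T ⧸ ℐ(M))` is `ℐ(M) ⊗ T + T ⊗ ℐ(M)`.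
-/

namespace TensorProduct

open Module LinearMap

section Contraction

variable {R W : Type*} [CommRing R] [AddCommGroup W] [Module R W]

lemma apply_rid_lTensor (f g : Dual R W) (u : W ⊗[R] W) :
    f (TensorProduct.rid R W (lTensor W g u)) = dualDistrib R W W (f ⊗ₜ g) u := by
  induction u using TensorProduct.induction_on with
  | zero => simp
  | tmul a b => simp [mul_comm]
  | add u v hu hv => simp only [map_add, hu, hv]

lemma apply_lid_rTensor (f g : Dual R W) (u : W ⊗[R] W) :
    g (TensorProduct.lid R W (rTensor W f u)) = dualDistrib R W W (f ⊗ₜ g) u := by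
  induction u using TensorProduct.induction_on with
  | zero => simp
  | tmul a b => simp
  | add u v hu hv => simp only [map_add, hu, hv]

theorem eq_zero_of_forall_dualDistrib_eq_zero [Free R W] {ι : Type*} (ψ : ι → Dual R W)
    (hψ : ∀ w, (∀ i, ψ i w = 0) → w = 0) {u : W ⊗[R] W}
    (hu : ∀ i j, dualDistrib R W W (ψ i ⊗ₜ ψ j) u = 0) : u = 0 := by
  classical
  -- The coefficients of `u` in a basis `e` of the right factor are killed by every `ψ i`,
  -- since pairing them with `ψ i` is pairing `e.coord k` with the contraction of `u` by `ψ i`.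
  let e := Free.chooseBasis R W
  have hcontr : ∀ i, TensorProduct.lid R W (rTensor W (ψ i) u) = 0 := fun i =>
    hψ _ fun j => by rw [apply_lid_rTensor, hu]
  have hcoeff : ∀ k, equivFinsuppOfBasisRight e u k = 0 := fun k =>
    hψ _ fun i => by
      rw [equivFinsuppOfBasisRight_apply, apply_rid_lTensor, ← apply_lid_rTensor, hcontr,
        map_zero]
  exact (equivFinsuppOfBasisRight e).map_eq_zero_iff.mp (Finsupp.ext hcoeff)

end Contraction

lemma dualDistrib_map {R V W : Type*} [CommRing R] [AddCommGroup V] [Module R V]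
    [AddCommGroup W] [Module R W] (f g : Dual R W) (a b : V →ₗ[R] W) (u : V ⊗[R] V) :
    dualDistrib R W W (f ⊗ₜ g) (map a b u) = dualDistrib R V V ((f ∘ₗ a) ⊗ₜ (g ∘ₗ b)) u := by
  induction u using TensorProduct.induction_on with
  | zero => simp
  | tmul a b => simp
  | add u v hu hv => simp only [map_add, hu, hv]

lemma ker_map_mkQ {R V : Type*} [CommRing R] [AddCommGroup V] [Module R V] (I : Submodule R V) :
    ker (map I.mkQ I.mkQ) =
      Submodule.map₂ (mk R V V) I ⊤ ⊔ Submodule.map₂ (mk R V V) ⊤ I := by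
  rw [map_ker (exact_subtype_mkQ I) I.mkQ_surjective (exact_subtype_mkQ I)
    I.mkQ_surjective, sup_comm, lTensor, rTensor, range_map, range_map, range_id,
    Submodule.range_subtype]

theorem mem_map₂_sup_of_forall_dualDistrib_eq_zero {K V ι : Type*} [Field K] [AddCommGroup V]
    [Module K V] (ψ : ι → Dual K V) {z : V ⊗[K] V}
    (hz : ∀ i j, dualDistrib K V V (ψ i ⊗ₜ ψ j) z = 0) :
    z ∈ Submodule.map₂ (mk K V V) (⨅ i, ker (ψ i)) ⊤ ⊔
      Submodule.map₂ (mk K V V) ⊤ (⨅ i, ker (ψ i)) := by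
  set I := ⨅ i, ker (ψ i)
  let ψI : ι → Dual K (V ⧸ I) := fun i => I.liftQ (ψ i) (iInf_le _ i)
  have hsep : ∀ w, (∀ i, ψI i w = 0) → w = 0 := by
    rintro ⟨v⟩ hv
    exact (Submodule.Quotient.mk_eq_zero I).mpr (Submodule.mem_iInf _ |>.mpr hv)
  rw [← ker_map_mkQ, mem_ker]
  exact eq_zero_of_forall_dualDistrib_eq_zero ψI hsep fun i j => by
    rw [dualDistrib_map]
    exact hz i j

end TensorProduct

section RealIntegrals

open MeasureTheory Set Interval

lemma ContDiffOn.intervalIntegrable_deriv {f : ℝ → ℝ} {a b : ℝ}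
    (hf : ContDiffOn ℝ 1 f (Icc a b)) (hab : a < b) : IntervalIntegrable (deriv f) volume a b := by
  rw [intervalIntegrable_iff_integrableOn_Ioo_of_le hab.le]
  have hc := hf.continuousOn_derivWithin (uniqueDiffOn_Icc hab) le_rfl
  exact (hc.integrableOn_Icc.mono_set Ioo_subset_Icc_self).congr_fun
    (fun x hx => derivWithin_of_mem_nhds (Icc_mem_nhds hx.1 hx.2)) measurableSet_Ioo


lemma intervalIntegral_eq_add_of_eqOn {f g h : ℝ → ℝ} {a t : ℝ} (ha : 0 ≤ a) (ht : 0 ≤ t)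
    (hg : IntervalIntegrable g volume 0 a) (hh : IntervalIntegrable h volume 0 t)
    (hfg : EqOn f g (Ioo 0 a)) (hfh : ∀ s ∈ Ioc a (a + t), f s = h (s - a)) :
    ∫ s in 0..a + t, f s = (∫ s in 0..a, g s) + ∫ r in 0..t, h r := by
  have hfg' : ∀ᵐ x, x ∈ Ι 0 a → f x = g x := by
    filter_upwards [volume.ae_ne a] with x hxa hx
    rw [uIoc_of_le ha] at hx
    exact hfg ⟨hx.1, lt_of_le_of_ne hx.2 hxa⟩
  have hfh' : ∀ x ∈ Ι a (a + t), f x = h (x - a) := by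
    rwa [uIoc_of_le (le_add_of_nonneg_right ht)]
  have hf₁ : IntervalIntegrable f volume 0 a :=
    hg.congr_ae (((ae_restrict_iff' measurableSet_uIoc).2 hfg').mono fun _ hx => hx.symm)
  have hf₂ : IntervalIntegrable f volume a (a + t) := by
    have hh' : IntervalIntegrable (fun s => h (s - a)) volume a (a + t) := by
      simpa [add_comm] using hh.comp_sub_right a
    exact hh'.congr_ae ((ae_restrict_iff' measurableSet_uIoc).2
      (Filter.Eventually.of_forall fun x hx => (hfh' x hx).symm))
  rw [← intervalIntegral.integral_add_adjacent_intervals hf₁ hf₂,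
    intervalIntegral.integral_congr_ae hfg',
    intervalIntegral.integral_congr_ae (Filter.Eventually.of_forall hfh'),
    intervalIntegral.integral_comp_sub_right, sub_self, add_sub_cancel_left]

end RealIntegrals

namespace PathVarieties

open MeasureTheory Set Interval TensorProduct

section Signature

variable {α : Type*}

lemma IsPath.intervalIntegrable_deriv {X : RawPath α} (hX : IsPath X) (i : α) :
    IntervalIntegrable (deriv fun t => X.toFun t i) volume 0 X.T := by
  obtain ⟨-, -, n, τ, hτ, hτ0, hτn, hpiece⟩ := hX
  have := IntervalIntegrable.trans_iterate (a := fun k => τ ⟨min k n, by omega⟩) (n := n)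
    fun k hk => by
      have e1 : (⟨min k n, by omega⟩ : Fin (n + 1)) = (⟨k, hk⟩ : Fin n).castSucc :=
        Fin.ext (by simp; omega)
      have e2 : (⟨min (k + 1) n, by omega⟩ : Fin (n + 1)) = (⟨k, hk⟩ : Fin n).succ :=
        Fin.ext (by simp; omega)
      rw [e1, e2]
      exact (hpiece _ i).intervalIntegrable_deriv (hτ Fin.castSucc_lt_succ)
  simpa [← hτ0, ← hτn, Fin.last] using this

lemma IsPath.continuousOn_sigRev {X : RawPath α} (hX : IsPath X) :
    ∀ w : Word α, ContinuousOn (sigRev X.toFun w) (Icc 0 X.T)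
  | [] => continuousOn_const
  | i :: w => by
    have hint : IntervalIntegrable (fun s => sigRev X.toFun w s * deriv (fun u => X.toFun u i) s)
        volume 0 X.T :=
      (hX.intervalIntegrable_deriv i).continuousOn_mul
        (by rw [uIcc_of_le hX.1.le]; exact hX.continuousOn_sigRev w)
    have h := intervalIntegral.continuousOn_primitive_interval' hint left_mem_uIcc
    rw [uIcc_of_le hX.1.le] at h
    exact h

lemma IsPath.intervalIntegrable_sigRev_mul_deriv {X : RawPath α} (hX : IsPath X) (w : Word α)
    (i : α) {t : ℝ} (ht : t ∈ Icc 0 X.T) :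
    IntervalIntegrable (fun s => sigRev X.toFun w s * deriv (fun u => X.toFun u i) s)
      volume 0 t := by
  have hT : t ∈ uIcc 0 X.T := by rwa [uIcc_of_le hX.1.le]
  refine ((hX.intervalIntegrable_deriv i).continuousOn_mul ?_).mono_set
    (uIcc_subset_uIcc left_mem_uIcc hT)
  rw [uIcc_of_le hX.1.le]
  exact hX.continuousOn_sigRev w

lemma sigRev_congr {F G : ℝ → α → ℝ} {a : ℝ} (hFG : ∀ t < a, F t = G t) :
    ∀ (w : Word α) {s : ℝ}, 0 ≤ s → s ≤ a → sigRev F w s = sigRev G w s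
  | [], _, _, _ => rfl
  | i :: w, s, hs0, hsa => by
    refine intervalIntegral.integral_congr_ae ?_
    filter_upwards [volume.ae_ne a] with x hxa hx
    rw [uIoc_of_le hs0] at hx
    have hxa : x < a := lt_of_le_of_ne (hx.2.trans hsa) hxa
    have hderiv : (fun u => F u i) =ᶠ[nhds x] fun u => G u i :=
      Filter.eventuallyEq_of_mem (Iio_mem_nhds hxa) fun t ht => congrFun (hFG t ht) i
    rw [sigRev_congr hFG w hx.1.le hxa.le, hderiv.deriv_eq]

lemma concat_toFun_of_le {X Y : RawPath α} {t : ℝ} (ht : t ≤ X.T) :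
    (concat X Y).toFun t = X.toFun t := by
  funext i
  simp [concat, ht]

lemma deriv_concat_of_lt {X Y : RawPath α} {s : ℝ} (hs : X.T < s) (i : α) :
    deriv (fun u => (concat X Y).toFun u i) s = deriv (fun u => Y.toFun u i) (s - X.T) := by
  have h : (fun u => (concat X Y).toFun u i) =ᶠ[nhds s]
      fun u => Y.toFun (u - X.T) i + (X.toFun X.T i - Y.toFun 0 i) := by
    filter_upwards [Ioi_mem_nhds hs] with u (hu : X.T < u)
    simp only [concat, not_le.2 hu, if_false]
    ring
  rw [h.deriv_eq, deriv_add_const, deriv_comp_sub_const (f := fun v => Y.toFun v i)]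

/-- `ρ` is the reversed word, so `ρ.take k` is its part read along `Y`. -/
lemma sigRev_concat {X Y : RawPath α} (hX : IsPath X) (hY : IsPath Y) :
    ∀ (ρ : Word α) {t : ℝ}, t ∈ Icc 0 Y.T →
      sigRev (concat X Y).toFun ρ (X.T + t) =
        ∑ k ∈ Finset.range (ρ.length + 1),
          sigRev Y.toFun (ρ.take k) t * sigRev X.toFun (ρ.drop k) X.T
  | [], _, _ => by simp [sigRev]
  | i :: ρ, t, ht => by
    set Z := concat X Y
    let H : ℝ → ℝ := ∑ k ∈ Finset.range (ρ.length + 1), fun r =>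
      sigRev X.toFun (ρ.drop k) X.T *
        (sigRev Y.toFun (ρ.take k) r * deriv (fun u => Y.toFun u i) r)
    have hYint : ∀ k, IntervalIntegrable
        (fun r => sigRev Y.toFun (ρ.take k) r * deriv (fun u => Y.toFun u i) r) volume 0 t :=
      fun k => hY.intervalIntegrable_sigRev_mul_deriv _ i ht
    have hleft : EqOn (fun s => sigRev Z.toFun ρ s * deriv (fun u => Z.toFun u i) s)
        (fun s => sigRev X.toFun ρ s * deriv (fun u => X.toFun u i) s) (Ioo 0 X.T) := by
      intro s hs
      have hderiv : (fun u => Z.toFun u i) =ᶠ[nhds s] fun u => X.toFun u i :=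
        Filter.eventuallyEq_of_mem (Iio_mem_nhds hs.2) fun u hu =>
          congrFun (concat_toFun_of_le (le_of_lt hu)) i
      simp only [sigRev_congr (F := Z.toFun) (fun u hu => concat_toFun_of_le hu.le) ρ hs.1.le
        hs.2.le, hderiv.deriv_eq]
    have hright : ∀ s ∈ Ioc X.T (X.T + t),
        sigRev Z.toFun ρ s * deriv (fun u => Z.toFun u i) s = H (s - X.T) := by
      intro s hs
      have hst : s - X.T ∈ Icc 0 Y.T := ⟨by linarith [hs.1], by linarith [hs.2, ht.2]⟩
      rw [← add_sub_cancel X.T s, sigRev_concat hX hY ρ hst, add_sub_cancel,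
        deriv_concat_of_lt hs.1, Finset.sum_mul]
      simp only [H, Finset.sum_apply]
      exact Finset.sum_congr rfl fun k _ => by ring
    have hsplit := intervalIntegral_eq_add_of_eqOn hX.1.le ht.1
      (hX.intervalIntegrable_sigRev_mul_deriv ρ i (right_mem_Icc.2 hX.1.le))
      (IntervalIntegrable.sum _ fun k _ => (hYint k).const_mul _) hleft hright
    change ∫ s in 0..X.T + t, sigRev Z.toFun ρ s * deriv (fun u => Z.toFun u i) s = _
    rw [hsplit, add_comm]
    simp only [Finset.sum_apply]
    rw [intervalIntegral.integral_finsetSum fun k _ => (hYint k).const_mul _, List.length_cons,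
      Finset.sum_range_succ' _ (ρ.length + 1)]
    congr 1
    · refine Finset.sum_congr rfl fun k _ => ?_
      rw [intervalIntegral.integral_const_mul, mul_comm]
      rfl
    · simp [sigRev]

lemma sig_concat {X Y : RawPath α} (hX : IsPath X) (hY : IsPath Y) (w : Word α) :
    sig (concat X Y) w =
      ∑ k ∈ Finset.range (w.length + 1), sig X (w.take k) * sig Y (w.drop k) := by
  have h := sigRev_concat hX hY w.reverse (right_mem_Icc.2 hY.1.le)
  rw [List.length_reverse] at h
  change sigRev (concat X Y).toFun w.reverse (X.T + Y.T) = _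
  rw [h, ← Finset.sum_range_reflect]
  refine Finset.sum_congr rfl fun k hk => ?_
  rw [Finset.mem_range] at hk
  rw [show w.length + 1 - 1 - k = w.length - k by omega, ← List.reverse_drop,
    ← List.reverse_take, mul_comm]
  rfl

lemma dualDistrib_deconc {X Y : RawPath α} (hX : IsPath X) (hY : IsPath Y)
    (x : TA α) :
    dualDistrib ℝ (TA α) (TA α)
        (Finsupp.linearCombination ℝ (sig X) ⊗ₜ Finsupp.linearCombination ℝ (sig Y)) (deconc x) =
      Finsupp.linearCombination ℝ (sig (concat X Y)) x := by
  rw [deconc, map_finsuppSum, Finsupp.linearCombination_apply]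
  refine Finsupp.sum_congr fun w _ => ?_
  rw [map_smul, map_sum, sig_concat hX hY w]
  simp

end Signature

/-- If a set `M` of paths is closed under concatenation, then
`I = ℐ(M)` is a coideal of the deconcatenation coproduct:
`Δx ∈ I⊗T(ℝ^d) + T(ℝ^d)⊗I` for every `x ∈ I`. -/
theorem statement16 {d : ℕ} (M : Set (RawPath (Fin d)))
    (hpath : ∀ X ∈ M, IsPath X)
    (hconc : ∀ X ∈ M, ∀ Y ∈ M, concat X Y ∈ M) :
    ∀ x ∈ Idl M, deconc x ∈
      Submodule.map₂ (TensorProduct.mk ℝ (TA (Fin d)) (TA (Fin d))) (Idl M) ⊤ ⊔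
      Submodule.map₂ (TensorProduct.mk ℝ (TA (Fin d)) (TA (Fin d))) ⊤ (Idl M) := by
  intro x hx
  have hIdl : Idl M =
      ⨅ X : M, LinearMap.ker (Finsupp.linearCombination ℝ (sig (X : RawPath (Fin d)))) :=
    iInf_subtype'
  rw [hIdl] at hx ⊢
  refine TensorProduct.mem_map₂_sup_of_forall_dualDistrib_eq_zero _ fun X Y => ?_
  rw [dualDistrib_deconc (hpath X X.2) (hpath Y Y.2)]
  exact (Submodule.mem_iInf _).mp hx ⟨_, hconc X X.2 Y Y.2⟩

end PathVarieties
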